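/- Let G be a graph, C a longest cycle of G with an orientation, {A,B} a partition of V(G) such that every vertex of A is adjacent to every vertex of B, with B ⊆ V(C). Suppose x₁, x₂ ∈ A \ V(C) with x₁x₂ ∈ E(G) and u ∈ B ∩ V(C). Then neither x₁ nor x₂ is adjacent to u⁺ or to u⁺², and consequently u⁺, u⁺² ∈ A. -/

import Mathlib

open SimpleGraph

def IsCycleEmb {V : Type*} (G : SimpleGraph V) (n : ℕ) (f : ZMod n → V) : Prop :=
  3 ≤ n ∧ Function.Injective f ∧ ∀ i : ZMod n, G.Adj (f i) (f (i + 1))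

def IsLongestCycle {V : Type*} (G : SimpleGraph V) (n : ℕ) (f : ZMod n → V) : Prop :=
  IsCycleEmb G n f ∧ ∀ (m : ℕ) (g : ZMod m → V), IsCycleEmb G m g → m ≤ n

def IsDominatingCycle {V : Type*} (G : SimpleGraph V) (n : ℕ) (f : ZMod n → V) : Prop :=
  IsCycleEmb G n f ∧ ∀ a b : V, G.Adj a b → a ∈ Set.range f ∨ b ∈ Set.range f

def IsCompOutside {V : Type*} (G : SimpleGraph V) (C : Set V) (H : Set V) : Prop :=
  H.Nonempty ∧ Disjoint H C ∧ (G.induce H).Connected ∧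
    ∀ a ∈ H, ∀ b : V, G.Adj a b → b ∉ C → b ∈ H

def TwoConnected {V : Type*} (G : SimpleGraph V) : Prop :=
  3 ≤ Nat.card V ∧ ∀ v : V, (G.induce ({v}ᶜ : Set V)).Connected

def KConnected {V : Type*} (G : SimpleGraph V) (k : ℕ) : Prop :=
  k < Nat.card V ∧ ∀ S : Set V, S.ncard < k → (G.induce (Sᶜ : Set V)).Connected

def HFree {W V : Type*} (H : SimpleGraph W) (G : SimpleGraph V) : Prop :=
  ¬ Nonempty (H ↪g G)

def IsCompleteMultipartite {V : Type*} (G : SimpleGraph V) : Prop :=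
  ∃ s : Setoid V, ∀ a b : V, G.Adj a b ↔ ¬ s.r a b

/-- `W = K₁ + 3K₂`: vertex 0 joined to three disjoint edges 12, 34, 56. -/
def Wgraph : SimpleGraph (Fin 7) :=
  SimpleGraph.fromRel (fun a b =>
    a = 0 ∨ (a = 1 ∧ b = 2) ∨ (a = 3 ∧ b = 4) ∨ (a = 5 ∧ b = 6))

/-- `Z₁`, the paw: triangle 012 plus pendant edge 23. -/
def pawGraph : SimpleGraph (Fin 4) :=
  SimpleGraph.fromRel (fun a b =>
    (a = 0 ∧ b = 1) ∨ (a = 1 ∧ b = 2) ∨ (a = 0 ∧ b = 2) ∨ (a = 2 ∧ b = 3))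

/-- The claw `K₁,₃`. -/
def clawGraph : SimpleGraph (Fin 4) :=
  SimpleGraph.fromRel (fun a _ => a = 0)

/-- `K₄` minus the edge 23. -/
def K4minusGraph : SimpleGraph (Fin 4) :=
  SimpleGraph.fromRel (fun a b => ¬((a = 2 ∧ b = 3) ∨ (a = 3 ∧ b = 2)))

/-- `K₁,₃**`: spider with legs of lengths 2, 2, 1 (center 0, legs 0-1-2, 0-3-4, 0-5). -/
def spider221 : SimpleGraph (Fin 6) :=
  SimpleGraph.fromRel (fun a b =>
    (a = 0 ∧ b = 1) ∨ (a = 1 ∧ b = 2) ∨ (a = 0 ∧ b = 3) ∨ (a = 3 ∧ b = 4) ∨ (a = 0 ∧ b = 5))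

/-- The theta graph `A_s`: two vertices joined by three internally disjoint paths,
each with `s` internal vertices. -/
def thetaGraph (s : ℕ) : SimpleGraph (Fin 2 ⊕ Fin 3 × Fin s) :=
  SimpleGraph.fromRel (fun a b =>
    (∃ (j : Fin 3) (k : Fin s), a = Sum.inl 0 ∧ b = Sum.inr (j, k) ∧ (k : ℕ) = 0) ∨
    (∃ (j : Fin 3) (k : Fin s), a = Sum.inl 1 ∧ b = Sum.inr (j, k) ∧ (k : ℕ) = s - 1) ∨
    (∃ (j : Fin 3) (k l : Fin s), a = Sum.inr (j, k) ∧ b = Sum.inr (j, l) ∧ (l : ℕ) = (k : ℕ) + 1))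

/-- `A′_s = 2K₁ + sK₂`. -/
def APrime (s : ℕ) : SimpleGraph (Fin 2 ⊕ Fin s × Fin 2) :=
  SimpleGraph.fromRel (fun a b =>
    (∃ (i : Fin 2) (x : Fin s × Fin 2), a = Sum.inl i ∧ b = Sum.inr x) ∨
    (∃ j : Fin s, a = Sum.inr (j, 0) ∧ b = Sum.inr (j, 1)))

/-- `A″_s = K₂ + (2K₂ ∪ K_s)`. -/
def ADoublePrime (s : ℕ) : SimpleGraph (Fin 2 ⊕ (Fin 2 × Fin 2 ⊕ Fin s)) :=
  SimpleGraph.fromRel (fun a b =>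
    (∃ i : Fin 2, a = Sum.inl i) ∨
    (∃ j : Fin 2, a = Sum.inr (Sum.inl (j, 0)) ∧ b = Sum.inr (Sum.inl (j, 1))) ∨
    (∃ p q : Fin s, a = Sum.inr (Sum.inr p) ∧ b = Sum.inr (Sum.inr q)))

/-- `A_s⁽¹⁾`: two disjoint triangles joined by three vertex-disjoint paths with `s`
internal vertices each. -/
def AOne (s : ℕ) : SimpleGraph (Fin 2 × Fin 3 ⊕ Fin 3 × Fin s) :=
  SimpleGraph.fromRel (fun a b =>
    (∃ (t : Fin 2) (i j : Fin 3), a = Sum.inl (t, i) ∧ b = Sum.inl (t, j)) ∨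
    (∃ (j : Fin 3) (k : Fin s), a = Sum.inl (0, j) ∧ b = Sum.inr (j, k) ∧ (k : ℕ) = 0) ∨
    (∃ (j : Fin 3) (k : Fin s), a = Sum.inl (1, j) ∧ b = Sum.inr (j, k) ∧ (k : ℕ) = s - 1) ∨
    (∃ (j : Fin 3) (k l : Fin s), a = Sum.inr (j, k) ∧ b = Sum.inr (j, l) ∧ (l : ℕ) = (k : ℕ) + 1))

/-- `A_s⁽⁵⁾`: vertices `x₁, x₂` and `y_{i,j}`; edges `x₁x₂`, `y_{1,j}y_{2,j}`, `x_i y_{i,j}`. -/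
def AFive (s : ℕ) : SimpleGraph (Fin 2 ⊕ Fin 2 × Fin s) :=
  SimpleGraph.fromRel (fun a b =>
    (a = Sum.inl 0 ∧ b = Sum.inl 1) ∨
    (∃ j : Fin s, a = Sum.inr (0, j) ∧ b = Sum.inr (1, j)) ∨
    (∃ (i : Fin 2) (j : Fin s), a = Sum.inl i ∧ b = Sum.inr (i, j)))

/-!
A path `P` of vertices off a cycle `C`, joining two vertices of `C` at distance `k` along `C`,
can replace the `k - 1` cycle vertices between its ends, giving a cycle of length
`|C| - k + 1 + |P|`; so if `C` is longest, `|P| < k`. Since `u ∈ B` is adjacent to both `x₁` and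
`x₂`, the detours `u x₁ u⁺` and `u x₂ x₁ u⁺²` (and those with `x₁, x₂` swapped) are too long.
Finally a vertex not adjacent to `x₁ ∈ A` cannot lie in `B`, so `u⁺, u⁺² ∈ A`.
-/

section Cycles

variable {V : Type*} {G : SimpleGraph V}

theorem exists_isCycleEmb_of_isChain {l : List V} (hl : 3 ≤ l.length) (hnodup : l.Nodup)
    (hchain : (l ++ l.take 1).IsChain G.Adj) : ∃ g : ZMod l.length → V, IsCycleEmb G l.length g := by
  have : NeZero l.length := ⟨by omega⟩
  refine ⟨fun j => l[j.val]'(ZMod.val_lt j), hl, ?_, fun j => ?_⟩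
  · intro j j' h
    exact ZMod.val_injective _ (Fin.mk.inj_iff.mp (List.nodup_iff_injective_get.mp hnodup h))
  have hj := ZMod.val_lt j
  have hsucc : (j + 1).val = (j.val + 1) % l.length := by
    rw [ZMod.val_add, ZMod.val_one'' (by omega)]
  have hstep := hchain.getElem j.val (by simp; omega)
  simp only [List.getElem_append_left hj] at hstep
  by_cases hlast : j.val + 1 < l.length
  · simpa only [hsucc, Nat.mod_eq_of_lt hlast, List.getElem_append_left hlast] using hstep
  · have hwrap : j.val + 1 = l.length := by omega
    simpa [hsucc, hwrap, List.getElem_append_right, List.getElem_take] using hstep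

def cycleArc {n : ℕ} (f : ZMod n → V) (j : ZMod n) (m : ℕ) : List V :=
  (List.range m).map fun k : ℕ => f (j + k)

variable {n : ℕ} {f : ZMod n → V}

theorem cycleArc_succ (j : ZMod n) (m : ℕ) :
    cycleArc f j (m + 1) = cycleArc f j m ++ [f (j + m)] := by
  simp [cycleArc, List.range_succ]

@[simp]
theorem length_cycleArc (j : ZMod n) (m : ℕ) : (cycleArc f j m).length = m := by
  simp [cycleArc]

theorem take_one_cycleArc_succ (j : ZMod n) (m : ℕ) : (cycleArc f j (m + 1)).take 1 = [f j] := by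
  simp [cycleArc, List.range_succ_eq_map]

theorem mem_range_of_mem_cycleArc {j : ZMod n} {m : ℕ} {v : V} (hv : v ∈ cycleArc f j m) :
    v ∈ Set.range f := by
  obtain ⟨k, -, rfl⟩ := List.mem_map.mp hv
  exact ⟨_, rfl⟩

theorem IsCycleEmb.isChain_cycleArc (hf : IsCycleEmb G n f) (j : ZMod n) (m : ℕ) :
    (cycleArc f j m).IsChain G.Adj := by
  refine (List.isChain_map _).mpr ((List.isChain_range _ _).mpr fun k _ => ?_)
  simpa [add_assoc] using hf.2.2 (j + k)

theorem IsCycleEmb.nodup_cycleArc (hf : IsCycleEmb G n f) (j : ZMod n) {m : ℕ} (hm : m ≤ n) :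
    (cycleArc f j m).Nodup := by
  refine (List.nodup_range).map_on fun a ha b hb hab => ?_
  have hcast := add_left_cancel (hf.2.1 hab)
  rw [ZMod.natCast_eq_natCast_iff'] at hcast
  simp only [List.mem_range] at ha hb
  rwa [Nat.mod_eq_of_lt (by omega), Nat.mod_eq_of_lt (by omega)] at hcast

theorem IsCycleEmb.exists_of_detour (hf : IsCycleEmb G n f) (i : ZMod n) {k : ℕ}
    (hk : 1 ≤ k) (hkn : k ≤ n) {p : List V} (hp : p.Nodup) (hpf : ∀ v ∈ p, v ∉ Set.range f)
    (hchain : (f i :: p ++ [f (i + k)]).IsChain G.Adj) (hlen : 2 ≤ n - k + p.length) :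
    ∃ g : ZMod (n - k + 1 + p.length) → V, IsCycleEmb G (n - k + 1 + p.length) g := by
  have hback : f (i + k + ((n - k : ℕ) : ZMod n)) = f i := by
    rw [add_assoc, ← Nat.cast_add, Nat.add_sub_cancel' hkn, ZMod.natCast_self, add_zero]
  have hcycle := exists_isCycleEmb_of_isChain (G := G) (l := cycleArc f (i + k) (n - k + 1) ++ p)
    (by simp; omega)
    (List.nodup_append.mpr ⟨hf.nodup_cycleArc _ (by omega), hp,
      fun a ha b hb hab => hpf b hb (hab ▸ mem_range_of_mem_cycleArc ha)⟩)
    (by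
      rw [List.take_append_of_le_length (by simp), take_one_cycleArc_succ,
        cycleArc_succ, hback, List.append_assoc]
      have harc := hf.isChain_cycleArc (i + k) (n - k + 1)
      rw [cycleArc_succ, hback] at harc
      exact harc.append_overlap (by simpa using hchain) (List.cons_ne_nil _ _))
  rwa [List.length_append, length_cycleArc] at hcycle

theorem IsLongestCycle.length_lt_of_detour (hC : IsLongestCycle G n f) (i : ZMod n) {k : ℕ}
    (hk : 1 ≤ k) (hkn : k ≤ n) {p : List V} (hp : p.Nodup) (hpf : ∀ v ∈ p, v ∉ Set.range f)
    (hchain : (f i :: p ++ [f (i + k)]).IsChain G.Adj) : p.length < k := by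
  by_contra! hkp
  have hn := hC.1.1
  obtain ⟨g, hg⟩ := hC.1.exists_of_detour i hk hkn hp hpf hchain (by omega)
  have := hC.2 _ g hg
  omega

theorem IsLongestCycle.not_adj_succ (hC : IsLongestCycle G n f) (i : ZMod n) {x : V}
    (hx : x ∉ Set.range f) (hxi : G.Adj x (f i)) : ¬ G.Adj x (f (i + 1)) := by
  intro hxi'
  have hn := hC.1.1
  have := hC.length_lt_of_detour i (k := 1) le_rfl (by omega) (List.nodup_singleton x)
    (by simpa using hx) (by simpa using ⟨hxi.symm, hxi'⟩)
  simp at this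

theorem IsLongestCycle.not_adj_add_two (hC : IsLongestCycle G n f) (i : ZMod n) {x y : V}
    (hx : x ∉ Set.range f) (hy : y ∉ Set.range f) (hxy : G.Adj x y) (hyi : G.Adj y (f i)) :
    ¬ G.Adj x (f (i + 2)) := by
  intro hxi
  have hn := hC.1.1
  have := hC.length_lt_of_detour i (k := 2) (by omega) (by omega) (p := [y, x])
    (by simpa using hxy.ne') (by simp only [List.forall_mem_cons]; exact ⟨hy, hx, nofun⟩)
    (by simpa using ⟨hyi.symm, hxy.symm, hxi⟩)
  simp at this

end Cycles

theorem stmt15_general {V : Type*} (G : SimpleGraph V)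
    (A B : Set V) (hpart : A ∪ B = Set.univ)
    (hjoin : ∀ a ∈ A, ∀ b ∈ B, G.Adj a b)
    (n : ℕ) (f : ZMod n → V) (hC : IsLongestCycle G n f)
    (x₁ x₂ : V) (hx₁ : x₁ ∈ A) (hx₂ : x₂ ∈ A)
    (hx₁C : x₁ ∉ Set.range f) (hx₂C : x₂ ∉ Set.range f)
    (hxadj : G.Adj x₁ x₂)
    (i : ZMod n) (hu : f i ∈ B) :
    ¬ G.Adj x₁ (f (i + 1)) ∧ ¬ G.Adj x₁ (f (i + 2)) ∧
    ¬ G.Adj x₂ (f (i + 1)) ∧ ¬ G.Adj x₂ (f (i + 2)) ∧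
    f (i + 1) ∈ A ∧ f (i + 2) ∈ A := by
  have h₁ : ¬ G.Adj x₁ (f (i + 1)) := hC.not_adj_succ i hx₁C (hjoin x₁ hx₁ _ hu)
  have h₂ : ¬ G.Adj x₁ (f (i + 2)) := hC.not_adj_add_two i hx₁C hx₂C hxadj (hjoin x₂ hx₂ _ hu)
  have mem_A_of_not_adj : ∀ v, ¬ G.Adj x₁ v → v ∈ A := fun v hv =>
    (hpart ▸ Set.mem_univ v : v ∈ A ∪ B).resolve_right fun hvB => hv (hjoin x₁ hx₁ v hvB)
  exact ⟨h₁, h₂, hC.not_adj_succ i hx₂C (hjoin x₂ hx₂ _ hu),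
    hC.not_adj_add_two i hx₂C hx₁C hxadj.symm (hjoin x₁ hx₁ _ hu), mem_A_of_not_adj _ h₁,
    mem_A_of_not_adj _ h₂⟩

/-- With a complete-join partition `{A, B}`, `B ⊆ V(C)` for a longest cycle `C`,
adjacent `x₁, x₂ ∈ A \ V(C)` and `u = f i ∈ B ∩ V(C)`: neither `x₁` nor `x₂` is
adjacent to `u⁺` or `u⁺²`, and consequently `u⁺, u⁺² ∈ A`. -/
theorem stmt15 {V : Type*} [Fintype V] (G : SimpleGraph V)
    (A B : Set V) (hpart : A ∪ B = Set.univ) (hdisj : Disjoint A B)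
    (hjoin : ∀ a ∈ A, ∀ b ∈ B, G.Adj a b)
    (n : ℕ) (f : ZMod n → V) (hC : IsLongestCycle G n f)
    (hBC : B ⊆ Set.range f)
    (x₁ x₂ : V) (hx₁ : x₁ ∈ A) (hx₂ : x₂ ∈ A)
    (hx₁C : x₁ ∉ Set.range f) (hx₂C : x₂ ∉ Set.range f)
    (hxadj : G.Adj x₁ x₂)
    (i : ZMod n) (hu : f i ∈ B) :
    ¬ G.Adj x₁ (f (i + 1)) ∧ ¬ G.Adj x₁ (f (i + 2)) ∧
    ¬ G.Adj x₂ (f (i + 1)) ∧ ¬ G.Adj x₂ (f (i + 2)) ∧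
    f (i + 1) ∈ A ∧ f (i + 2) ∈ A :=
  stmt15_general G A B hpart hjoin n f hC x₁ x₂ hx₁ hx₂ hx₁C hx₂C hxadj i hu
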